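/- Let A be an invertible d×d real matrix, N a d×d real matrix, and C_0, …, C_{p−1} d×d real matrices whose companion block matrix M satisfies ρ(M) < 1. Let E_p denote the pd×d matrix consisting of p−1 zero d×d blocks stacked above an identity block I_d. Then E_p^⊤ (I_{pd} − M)^{-1} E_p N = −A^{-1} if and only if N is invertible and ∑_{k=0}^{p−1} C_k = I_d + N A. (Equivalently: for every b ∈ ℝ^d, the iteration z^{k+1} = M z^k + E_p N b converges and the last d coordinates of its limit equal −A^{-1} b, if and only if ∑_{k=0}^{p−1} C_k = I_d + N A with N invertible.) -/

import Mathlib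

/-- The companion block matrix of `d×d` matrices `C 0, …, C (p-1)`: the `pd×pd`
block matrix with identity blocks `I_d` on the block superdiagonal, bottom block
row `(C 0, C 1, …, C (p-1))`, and zero blocks elsewhere. -/
def companion {p d : ℕ} {R : Type*} [CommRing R]
    (C : Fin p → Matrix (Fin d) (Fin d) R) :
    Matrix (Fin p × Fin d) (Fin p × Fin d) R :=
  Matrix.of fun x y =>
    if (x.1 : ℕ) + 1 = p then (C y.1) x.2 y.2
    else if (y.1 : ℕ) = (x.1 : ℕ) + 1 then (if x.2 = y.2 then 1 else 0) else 0

/-- The `pd×d` matrix `E_p = (0_d, …, 0_d, I_d)ᵀ`: `p-1` zero `d×d` blocks stacked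
above an identity block `I_d`. -/
def Emat (p d : ℕ) (R : Type*) [CommRing R] : Matrix (Fin p × Fin d) (Fin d) R :=
  Matrix.of fun x b => if (x.1 : ℕ) + 1 = p ∧ x.2 = b then 1 else 0

/-- The spectral radius of a square real matrix: the maximum modulus of its
complex eigenvalues (the spectrum of the matrix viewed as a complex matrix). -/
noncomputable def specRadR {m : Type*} [Fintype m] [DecidableEq m]
    (M : Matrix m m ℝ) : ℝ :=
  sSup ((fun z : ℂ => ‖z‖) '' spectrum ℂ (M.map Complex.ofReal))

/-! Let `G` be the column of `p` identity blocks. Every block row of `(1 - M) G` but the last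
vanishes, so `(1 - M) G = E_p (1 - ∑ C_k)`, while `E_pᵀ G = 1`. Hence `E_pᵀ (1 - M)⁻¹ E_p` is a left
inverse of `1 - ∑ C_k`, and the condition becomes `N A = ∑ C_k - 1`, which also forces `N` to be
invertible. `1 - M` is invertible because `1` is not in the spectrum of `M` when `ρ(M) < 1`. -/

section SpectralRadius

variable {m : Type*} [Fintype m] [DecidableEq m]

lemma one_notMem_spectrum_of_specRadR_lt_one {M : Matrix m m ℝ} (h : specRadR M < 1) :
    (1 : ℂ) ∉ spectrum ℂ (M.map Complex.ofReal) := fun h1 =>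
  (le_csSup ((Matrix.finite_spectrum _).image _).bddAbove ⟨1, h1, norm_one⟩).not_gt h

lemma isUnit_one_sub_of_specRadR_lt_one {M : Matrix m m ℝ} (h : specRadR M < 1) :
    IsUnit (1 - M) := by
  have h1 := spectrum.notMem_iff.mp (one_notMem_spectrum_of_specRadR_lt_one h)
  have hmap : algebraMap ℂ _ 1 - M.map Complex.ofReal = Complex.ofRealHom.mapMatrix (1 - M) := by
    rw [map_one, map_sub, map_one]; rfl
  rw [hmap, Matrix.isUnit_iff_isUnit_det, ← RingHom.map_det, isUnit_iff_ne_zero] at h1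
  rw [Matrix.isUnit_iff_isUnit_det, isUnit_iff_ne_zero]
  exact fun h0 => h1 (by simp [h0])

end SpectralRadius

section Companion

variable {p d : ℕ} {R : Type*} [CommRing R]

def stackedOne (p d : ℕ) (R : Type*) [CommRing R] : Matrix (Fin p × Fin d) (Fin d) R :=
  Matrix.of fun x b => (1 : Matrix (Fin d) (Fin d) R) x.2 b

lemma companion_mul_stackedOne_apply (C : Fin p → Matrix (Fin d) (Fin d) R)
    (x : Fin p × Fin d) (b : Fin d) :
    (companion C * stackedOne p d R) x b =
      if (x.1 : ℕ) + 1 = p then (∑ k, C k) x.2 b else (1 : Matrix (Fin d) (Fin d) R) x.2 b := by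
  rw [Matrix.mul_apply, Fintype.sum_prod_type]
  split_ifs with hx
  · simp [companion, stackedOne, hx, Matrix.sum_apply, Matrix.one_apply]
  · have hlt : (x.1 : ℕ) + 1 < p := lt_of_le_of_ne x.1.isLt hx
    rw [Finset.sum_eq_single ⟨(x.1 : ℕ) + 1, hlt⟩]
    · simp [companion, stackedOne, hx, Matrix.one_apply]
    · intro k _ hk
      simp [companion, stackedOne, hx, Fin.ext_iff.not.mp hk]
    · simp

lemma one_sub_companion_mul_stackedOne (C : Fin p → Matrix (Fin d) (Fin d) R) :
    (1 - companion C) * stackedOne p d R = Emat p d R * (1 - ∑ k, C k) := by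
  ext x b
  rw [Matrix.sub_mul, Matrix.sub_apply, Matrix.one_mul, companion_mul_stackedOne_apply,
    Matrix.mul_apply]
  split_ifs with hx
  · simp [Emat, stackedOne, hx, Matrix.sub_apply]
  · simp [Emat, stackedOne, hx]

lemma Emat_transpose_mul_stackedOne (hp : 0 < p) :
    (Emat p d R).transpose * stackedOne p d R = 1 := by
  ext a b
  rw [Matrix.mul_apply, Fintype.sum_prod_type,
    Finset.sum_eq_single ⟨p - 1, Nat.sub_lt hp one_pos⟩]
  · simp [Emat, stackedOne, Nat.sub_one_add_one hp.ne', Matrix.one_apply, eq_comm]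
  · intro k _ hk
    have : (k : ℕ) + 1 ≠ p := fun h => hk (Fin.ext (by simp; omega))
    simp [Emat, this]
  · simp

lemma Emat_transpose_mul_inv_mul_Emat_mul_one_sub_sum (hp : 0 < p)
    (C : Fin p → Matrix (Fin d) (Fin d) R) (hC : IsUnit (1 - companion C)) :
    (Emat p d R).transpose * (1 - companion C)⁻¹ * Emat p d R * (1 - ∑ k, C k) = 1 :=
  calc _ = (Emat p d R).transpose * ((1 - companion C)⁻¹ * (Emat p d R * (1 - ∑ k, C k))) := by
        simp only [Matrix.mul_assoc]
    _ = (Emat p d R).transpose * stackedOne p d R := by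
        rw [← one_sub_companion_mul_stackedOne, ← Matrix.mul_assoc (1 - companion C)⁻¹,
          Matrix.nonsing_inv_mul _ ((Matrix.isUnit_iff_isUnit_det _).mp hC), Matrix.one_mul]
    _ = 1 := Emat_transpose_mul_stackedOne hp

end Companion

lemma Matrix.mul_eq_neg_inv_iff {n R : Type*} [Fintype n] [DecidableEq n] [CommRing R]
    {X B A N : Matrix n n R} (hXB : X * B = 1) (hA : IsUnit A) :
    X * N = -A⁻¹ ↔ N * A = -B := by
  have hBX : B * X = 1 := mul_eq_one_comm.mp hXB
  have hAdet : IsUnit A.det := (Matrix.isUnit_iff_isUnit_det A).mp hA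
  constructor
  · intro h
    calc N * A = B * (X * N) * A := by rw [← Matrix.mul_assoc, hBX, Matrix.one_mul]
      _ = -B := by rw [h, mul_neg, neg_mul, Matrix.mul_assoc, Matrix.nonsing_inv_mul _ hAdet,
          Matrix.mul_one]
  · intro h
    calc X * N = X * (N * A) * A⁻¹ := by
          rw [Matrix.mul_assoc X, Matrix.mul_assoc N, Matrix.mul_nonsing_inv _ hAdet,
            Matrix.mul_one]
      _ = -A⁻¹ := by rw [h, mul_neg, hXB, neg_mul, Matrix.one_mul]

theorem stmt_10 {p d : ℕ} (hp : 0 < p)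
    (A N : Matrix (Fin d) (Fin d) ℝ) (hA : IsUnit A)
    (C : Fin p → Matrix (Fin d) (Fin d) ℝ)
    (hρ : specRadR (companion C) < 1) :
    (Emat p d ℝ).transpose * (1 - companion C)⁻¹ * (Emat p d ℝ) * N = -A⁻¹ ↔
      (IsUnit N ∧ ∑ k : Fin p, C k = 1 + N * A) := by
  have hXB := Emat_transpose_mul_inv_mul_Emat_mul_one_sub_sum hp C
    (isUnit_one_sub_of_specRadR_lt_one hρ)
  rw [Matrix.mul_eq_neg_inv_iff hXB hA]
  constructor
  · intro h
    have hB : IsUnit (N * A) := h ▸ (IsUnit.of_mul_eq_one_right _ hXB).neg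
    exact ⟨isUnit_of_mul_isUnit_left hB, by rw [h]; abel⟩
  · rintro ⟨-, hsum⟩
    rw [hsum]
    abel
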